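/- arXiv:1808.07310 — 4 statements merged into one kernel-verified Lean document; each statement's English description precedes it below -/
import Mathlib

section
/- Let X ⊆ ℂ² be compact and let f = p/q be a rational function on ℂ², where p and q are relatively prime polynomials and q is nonvanishing on X. Suppose Γ = f(X) satisfies R(Γ) = C(Γ). Let F : ℂ² → ℂ be an entire function whose zero set V = {F = 0} is disjoint from X. Then R(X) contains every ψ ∈ C(X) such that for each t ∈ Γ the restriction ψ|X_t belongs to R_V(X_t). -/
open Complex Set

/-- Evaluation of a polynomial in two variables at a point of `ℂ × ℂ`. -/
noncomputable def evalP (P : MvPolynomial (Fin 2) ℂ) (x : ℂ × ℂ) : ℂ :=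
  MvPolynomial.eval ![x.1, x.2] P

/-- `ψ` belongs to `R(X)`: it is a uniform limit on `X` of rational functions `P/Q`
with `Q` nonvanishing on `X`. -/
def MemRatAlg (X : Set (ℂ × ℂ)) (ψ : ℂ × ℂ → ℂ) : Prop :=
  ∀ ε > 0, ∃ P Q : MvPolynomial (Fin 2) ℂ, (∀ x ∈ X, evalP Q x ≠ 0) ∧
    ∀ x ∈ X, ‖ψ x - evalP P x / evalP Q x‖ < ε

/-- `ψ` belongs to `R(Γ)` for a compact set `Γ ⊆ ℂ`: uniform limit on `Γ` of
one-variable rational functions with poles off `Γ`. -/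
def MemRatAlg1 (Γ : Set ℂ) (ψ : ℂ → ℂ) : Prop :=
  ∀ ε > 0, ∃ P Q : Polynomial ℂ, (∀ t ∈ Γ, Polynomial.eval t Q ≠ 0) ∧
    ∀ t ∈ Γ, ‖ψ t - Polynomial.eval t P / Polynomial.eval t Q‖ < ε

/-- `ψ` belongs to `R_V(Y)`, where `V = {F = 0}`: uniform limit on `Y` of functions
`G/F^m` with `G` entire and `m ∈ ℕ`. -/
def MemRVAlg (F : ℂ × ℂ → ℂ) (Y : Set (ℂ × ℂ)) (ψ : ℂ × ℂ → ℂ) : Prop :=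
  ∀ ε > 0, ∃ (G : ℂ × ℂ → ℂ) (m : ℕ), Differentiable ℂ G ∧
    ∀ x ∈ Y, ‖ψ x - G x / (F x) ^ m‖ < ε

/-!
Let `A = R(X)`, a closed subalgebra of `C(X)`. It is inverse-closed: a uniform limit of
rational functions that is zero-free on `X` is a limit of zero-free rational functions, whose
reciprocals are rational. Cauchy's formula `g(u) = (2πi)⁻¹ ∮ (ζ - u)⁻¹ g(ζ) dζ`, read in the
Banach space `C(X)`, exhibits `G(u, v)` as an integral of elements of `A` once every `G(ζ, v)`
is in `A`; applied to `v = x₂` and then to `u = x₁`, it puts every entire `G`, hence also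
`1/F`, in `A`. Since `R(Γ) = C(Γ)`, `A` contains `h ∘ f` for every continuous `h`. Finally,
near each fibre `X_t` the function `ψ` is within `ε` of some `G/Fᵐ ∈ A`; by compactness this
persists on `f⁻¹(U_t)` for a neighbourhood `U_t` of `t`, and a partition of unity on `Γ`
subordinate to finitely many `U_t`, pulled back by `f`, glues these approximants into an
element of `A` within `ε` of `ψ`.
-/

open Filter Topology

theorem ContinuousMap.mem_closure_iff_forall_norm_lt {Y E : Type*} [TopologicalSpace Y]
    [CompactSpace Y] [NormedAddCommGroup E] {S : Set C(Y, E)} {g : C(Y, E)} :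
    g ∈ closure S ↔ ∀ ε > 0, ∃ r ∈ S, ∀ y, ‖g y - r y‖ < ε := by
  simp only [Metric.mem_closure_iff, dist_eq_norm]
  exact forall₂_congr fun ε hε => exists_congr fun r => and_congr_right fun _ =>
    (g - r).norm_lt_iff hε

theorem Subalgebra.mem_topologicalClosure_of_mul_eq_one {R A : Type*} [CommRing R]
    [NormedCommRing A] [HasSummableGeomSeries A] [Algebra R A] {S : Subalgebra R A}
    (hS : ∀ a ∈ S, ∀ b, a * b = 1 → b ∈ S) {a b : A} (ha : a ∈ S.topologicalClosure)
    (hab : a * b = 1) : b ∈ S.topologicalClosure := by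
  let u : Aˣ := ⟨a, b, hab, by rw [mul_comm, hab]⟩
  have hlim : Tendsto Ring.inverse (𝓝[S] a) (𝓝 b) := by
    have := (NormedRing.inverse_continuousAt u).mono_left (nhdsWithin_le_nhds (s := S))
    rwa [Ring.inverse_unit] at this
  have := mem_closure_iff_nhdsWithin_neBot.mp ha
  refine mem_closure_of_tendsto hlim ?_
  filter_upwards [self_mem_nhdsWithin,
    nhdsWithin_le_nhds (Units.isOpen.mem_nhds u.isUnit)] with x hxS hx
  exact hS x hxS _ (Ring.mul_inverse_cancel x hx)

theorem Submodule.intervalIntegral_mem {E : Type*} [NormedAddCommGroup E] [NormedSpace ℂ E]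
    [CompleteSpace E] {S : Submodule ℂ E} (hS : IsClosed (S : Set E)) {f : ℝ → E}
    (hf : ∀ t, f t ∈ S) (a b : ℝ) : ∫ t in a..b, f t ∈ S := by
  have := hS.completeSpace_coe
  rw [show f = fun t => S.subtypeₗᵢ ⟨f t, hf t⟩ from rfl,
    S.subtypeₗᵢ.intervalIntegral_comp_comm]
  exact Submodule.coe_mem _

section

variable {Y : Type*} [TopologicalSpace Y] [CompactSpace Y] {A : Subalgebra ℂ C(Y, ℂ)}

theorem Subalgebra.comp_prodMk_id_mem_of_curry_mem (hA : IsClosed (A : Set C(Y, ℂ)))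
    (hAinv : ∀ a ∈ A, ∀ b, a * b = 1 → b ∈ A) {u : C(Y, ℂ)} (hu : u ∈ A)
    (H : C(ℂ × Y, ℂ)) (hHd : ∀ y, Differentiable ℂ fun ζ => H (ζ, y))
    (hHA : ∀ ζ, H.curry ζ ∈ A) :
    H.comp (u.prodMk (ContinuousMap.id Y)) ∈ A := by
  set R := ‖u‖ + 1
  have hR : ∀ y, u y ∈ Metric.ball (0 : ℂ) R := fun y => by
    simpa [R] using (u.norm_coe_le_norm y).trans_lt (lt_add_one _)
  have hne : ∀ θ y, circleMap 0 R θ - u y ≠ 0 := fun θ y h => by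
    have := hR y
    rw [← sub_eq_zero.mp h, Metric.mem_ball, dist_zero_right, norm_circleMap_zero] at this
    exact this.ne (abs_of_pos (by positivity : (0:ℝ) < R))
  let K : C(ℝ × Y, ℂ) := ⟨fun p => (circleMap 0 R p.1 * I) *
      ((circleMap 0 R p.1 - u p.2)⁻¹ * H (circleMap 0 R p.1, p.2)), by
    refine Continuous.mul (by fun_prop) (Continuous.mul ?_ (by fun_prop))
    exact Continuous.inv₀ (by fun_prop) fun p => hne p.1 p.2⟩
  have hK : ∀ θ, K.curry θ ∈ A := fun θ => by
    let b : C(Y, ℂ) := ⟨fun y => (circleMap 0 R θ - u y)⁻¹,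
      Continuous.inv₀ (by fun_prop) (hne θ)⟩
    have hb : (algebraMap ℂ C(Y, ℂ) (circleMap 0 R θ) - u) * b = 1 := by
      ext y; simp [b, hne θ y]
    have hbA := hAinv _ (sub_mem (A.algebraMap_mem _) hu) b hb
    have : K.curry θ = (circleMap 0 R θ * I) • (b * H.curry (circleMap 0 R θ)) := by
      ext y; simp [K, b]
    rw [this]
    exact A.smul_mem (mul_mem hbA (hHA _)) _
  -- Cauchy's integral formula on the circle of radius `R`, as an identity in `C(Y, ℂ)`.
  suffices H.comp (u.prodMk (ContinuousMap.id Y)) =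
      (2 * Real.pi * I : ℂ)⁻¹ • ∫ θ in (0)..(2 * Real.pi), K.curry θ by
    rw [this]
    exact A.smul_mem (Submodule.intervalIntegral_mem (S := A.toSubmodule) hA hK _ _) _
  ext y
  have hKi : IntervalIntegrable (fun θ => K.curry θ) MeasureTheory.volume 0 (2 * Real.pi) :=
    (K.curry.continuous).intervalIntegrable _ _
  have hev : (∫ θ in (0)..(2 * Real.pi), K.curry θ) y =
      ∫ θ in (0)..(2 * Real.pi), K.curry θ y :=
    ((ContinuousMap.evalCLM ℂ y).intervalIntegral_comp_comm hKi).symm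
  rw [ContinuousMap.smul_apply, hev,
    show (H.comp (u.prodMk (ContinuousMap.id Y))) y = H (u y, y) from rfl,
    ← ((hHd y).diffContOnCl.two_pi_i_inv_smul_circleIntegral_sub_inv_smul (hR y))]
  simp [circleIntegral, K, deriv_circleMap]

theorem Subalgebra.comp_prodMk_mem_of_differentiable (hA : IsClosed (A : Set C(Y, ℂ)))
    (hAinv : ∀ a ∈ A, ∀ b, a * b = 1 → b ∈ A) {u v : C(Y, ℂ)} (hu : u ∈ A) (hv : v ∈ A)
    {G : ℂ × ℂ → ℂ} (hG : Differentiable ℂ G) :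
    (⟨G, hG.continuous⟩ : C(ℂ × ℂ, ℂ)).comp (u.prodMk v) ∈ A := by
  have hGc := hG.continuous
  have hslice : ∀ ζ, (⟨fun y => G (ζ, v y), by fun_prop⟩ : C(Y, ℂ)) ∈ A := fun ζ =>
    A.comp_prodMk_id_mem_of_curry_mem hA hAinv hv ⟨fun p => G (ζ, p.1), by fun_prop⟩
      (fun _ => hG.comp ((differentiable_const ζ).prodMk differentiable_id)) fun η => by
        convert A.algebraMap_mem (G (ζ, η)) using 1
        ext; rfl
  exact A.comp_prodMk_id_mem_of_curry_mem hA hAinv hu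
    ⟨fun p => G (p.1, v p.2), by fun_prop⟩
    (fun y => hG.comp (differentiable_id.prodMk (differentiable_const (v y)))) hslice

end

theorem exists_isOpen_forall_lt_of_forall_fiber_lt {Y T : Type*} [TopologicalSpace Y]
    [CompactSpace Y] [TopologicalSpace T] [T2Space T] {f : Y → T} (hf : Continuous f)
    {φ : Y → ℝ} (hφ : Continuous φ) {ε : ℝ} {t : T} (h : ∀ y, f y = t → φ y < ε) :
    ∃ U, IsOpen U ∧ t ∈ U ∧ ∀ y, f y ∈ U → φ y < ε := by
  refine ⟨(f '' {y | ε ≤ φ y})ᶜ,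
    ((isClosed_le continuous_const hφ).isCompact.image hf).isClosed.isOpen_compl, ?_, ?_⟩
  · rintro ⟨y, hy, rfl⟩
    exact (h y rfl).not_ge hy
  · intro y hy
    by_contra! h'
    exact hy ⟨y, h', rfl⟩

section

variable {Y T : Type*} [TopologicalSpace Y] [CompactSpace Y] [TopologicalSpace T] [T2Space T]
  [NormalSpace T] [ParacompactSpace T] {A : Subalgebra ℂ C(Y, ℂ)} {f : C(Y, T)}

theorem Subalgebra.exists_mem_forall_norm_sub_le_of_locally (hfA : ∀ h : C(T, ℂ), h.comp f ∈ A)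
    {ψ : C(Y, ℂ)} {ε : ℝ} (hloc : ∀ t ∈ range f, ∃ g ∈ A, ∃ U, IsOpen U ∧ t ∈ U ∧
      ∀ y, f y ∈ U → ‖ψ y - g y‖ ≤ ε) :
    ∃ φ ∈ A, ∀ y, ‖ψ y - φ y‖ ≤ ε := by
  choose! g hgA U hUo htU hUg using hloc
  have hK := isCompact_range f.continuous
  obtain ⟨s, hsK, hcover⟩ :=
    hK.elim_nhds_subcover U fun t ht => (hUo t ht).mem_nhds (htU t ht)
  have hs : ∀ i : s, (i : T) ∈ range f := fun i => hsK i i.2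
  obtain ⟨ρ, hρU⟩ := PartitionOfUnity.exists_isSubordinate hK.isClosed (fun i : s => U i)
    (fun i => hUo i (hs i)) (hcover.trans fun z hz => by
      obtain ⟨i, hi, hz⟩ := mem_iUnion₂.mp hz
      exact mem_iUnion.mpr ⟨⟨i, hi⟩, hz⟩)
  let ρc : s → C(T, ℂ) := fun i => ⟨fun z => (ρ i z : ℂ), by fun_prop⟩
  refine ⟨∑ i : s, (ρc i).comp f * g i,
    sum_mem fun i _ => mul_mem (hfA _) (hgA i (hs i)), fun y => ?_⟩
  have hmem := ρ.finsum_smul_mem_convex (g := fun i _ => g i y)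
    (t := Metric.closedBall (ψ y) ε) (mem_range_self y) (fun i hi => ?_) (convex_closedBall _ _)
  · rw [finsum_eq_sum_of_fintype, Metric.mem_closedBall, dist_comm, dist_eq_norm] at hmem
    refine Eq.trans_le ?_ hmem
    simp [ρc, Complex.real_smul]
  · simpa [Metric.mem_closedBall, dist_eq_norm, norm_sub_rev] using
      hUg i (hs i) y (hρU i (subset_tsupport _ hi))

theorem Subalgebra.mem_of_forall_fiber_approx (hA : IsClosed (A : Set C(Y, ℂ)))
    (hfA : ∀ h : C(T, ℂ), h.comp f ∈ A) {ψ : C(Y, ℂ)}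
    (hψ : ∀ t ∈ range f, ∀ ε > 0, ∃ g ∈ A, ∀ y, f y = t → ‖ψ y - g y‖ < ε) : ψ ∈ A := by
  rw [← SetLike.mem_coe, ← hA.closure_eq, ContinuousMap.mem_closure_iff_forall_norm_lt]
  intro ε hε
  obtain ⟨φ, hφA, hφ⟩ := A.exists_mem_forall_norm_sub_le_of_locally hfA (ε := ε / 2)
    fun t ht => by
      obtain ⟨g, hgA, hg⟩ := hψ t ht (ε / 2) (half_pos hε)
      obtain ⟨U, hUo, htU, hUg⟩ :=
        exists_isOpen_forall_lt_of_forall_fiber_lt f.continuous (ψ - g).continuous.norm hg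
      exact ⟨g, hgA, U, hUo, htU, fun y hy => (hUg y hy).le⟩
  exact ⟨φ, hφA, fun y => (hφ y).trans_lt (half_lt_self hε)⟩

end

theorem continuous_evalP (P : MvPolynomial (Fin 2) ℂ) : Continuous (evalP P) :=
  (MvPolynomial.continuous_eval P).comp (by fun_prop)

def rationalFunctions (X : Set (ℂ × ℂ)) : Subalgebra ℂ C(X, ℂ) where
  carrier := {g | ∃ P Q : MvPolynomial (Fin 2) ℂ, (∀ x : X, evalP Q x ≠ 0) ∧
    ∀ x : X, g x = evalP P x / evalP Q x}
  mul_mem' := by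
    rintro g₁ g₂ ⟨P₁, Q₁, hQ₁, h₁⟩ ⟨P₂, Q₂, hQ₂, h₂⟩
    refine ⟨P₁ * P₂, Q₁ * Q₂, fun x => ?_, fun x => ?_⟩
    · simpa [evalP] using And.intro (hQ₁ x) (hQ₂ x)
    · simp only [ContinuousMap.mul_apply, h₁ x, h₂ x, evalP, map_mul, div_mul_div_comm]
  add_mem' := by
    rintro g₁ g₂ ⟨P₁, Q₁, hQ₁, h₁⟩ ⟨P₂, Q₂, hQ₂, h₂⟩
    refine ⟨P₁ * Q₂ + Q₁ * P₂, Q₁ * Q₂, fun x => ?_, fun x => ?_⟩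
    · simpa [evalP] using And.intro (hQ₁ x) (hQ₂ x)
    · rw [ContinuousMap.add_apply, h₁ x, h₂ x, div_add_div _ _ (hQ₁ x) (hQ₂ x)]
      simp [evalP]
  algebraMap_mem' c := ⟨MvPolynomial.C c, 1, fun x => by simp [evalP], fun x => by simp [evalP]⟩

noncomputable abbrev ratAlg (X : Set (ℂ × ℂ)) [CompactSpace X] : Subalgebra ℂ C(X, ℂ) :=
  (rationalFunctions X).topologicalClosure

section

variable {X : Set (ℂ × ℂ)}

theorem fst_mem_rationalFunctions :
    (⟨fun x => (x : ℂ × ℂ).1, by fun_prop⟩ : C(X, ℂ)) ∈ rationalFunctions X :=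
  ⟨MvPolynomial.X 0, 1, fun x => by simp [evalP], fun x => by simp [evalP]⟩

theorem snd_mem_rationalFunctions :
    (⟨fun x => (x : ℂ × ℂ).2, by fun_prop⟩ : C(X, ℂ)) ∈ rationalFunctions X :=
  ⟨MvPolynomial.X 1, 1, fun x => by simp [evalP], fun x => by simp [evalP]⟩

theorem mem_rationalFunctions_of_mul_eq_one {a b : C(X, ℂ)} (ha : a ∈ rationalFunctions X)
    (hab : a * b = 1) : b ∈ rationalFunctions X := by
  obtain ⟨P, Q, hQ, hPQ⟩ := ha
  have hb : ∀ x, b x = (a x)⁻¹ := fun x =>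
    (eq_inv_of_mul_eq_one_right (congrArg (· x) hab :))
  refine ⟨Q, P, fun x h => ?_, fun x => by rw [hb, hPQ, inv_div]⟩
  simpa [hPQ, h] using congrArg (· x) hab

theorem mem_ratAlg_of_mul_eq_one [CompactSpace X] {a b : C(X, ℂ)} (ha : a ∈ ratAlg X)
    (hab : a * b = 1) : b ∈ ratAlg X :=
  Subalgebra.mem_topologicalClosure_of_mul_eq_one
    (fun _ ha _ hab => mem_rationalFunctions_of_mul_eq_one ha hab) ha hab

theorem restrict_mem_ratAlg [CompactSpace X] {G : ℂ × ℂ → ℂ} (hG : Differentiable ℂ G) :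
    ContinuousMap.restrict X ⟨G, hG.continuous⟩ ∈ ratAlg X :=
  Subalgebra.comp_prodMk_mem_of_differentiable
    (rationalFunctions X).isClosed_topologicalClosure
    (fun _ ha _ hab => mem_ratAlg_of_mul_eq_one ha hab)
    ((rationalFunctions X).le_topologicalClosure fst_mem_rationalFunctions)
    ((rationalFunctions X).le_topologicalClosure snd_mem_rationalFunctions) hG

theorem MemRatAlg.of_mem_ratAlg [CompactSpace X] {ψ : ℂ × ℂ → ℂ} (hψ : ContinuousOn ψ X)
    (h : ⟨X.domRestrict ψ, hψ.domRestrict⟩ ∈ ratAlg X) : MemRatAlg X ψ := by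
  intro ε hε
  obtain ⟨r, ⟨P, Q, hQ, hPQ⟩, hr⟩ :=
    ContinuousMap.mem_closure_iff_forall_norm_lt.mp h ε hε
  exact ⟨P, Q, fun x hx => hQ ⟨x, hx⟩, fun x hx => hPQ ⟨x, hx⟩ ▸ hr ⟨x, hx⟩⟩

theorem comp_mem_ratAlg [CompactSpace X] {f : C(X, ℂ)} (hf : f ∈ rationalFunctions X)
    {h : C(ℂ, ℂ)} (hh : MemRatAlg1 (range f) h) : h.comp f ∈ ratAlg X := by
  refine ContinuousMap.mem_closure_iff_forall_norm_lt.mpr fun ε hε => ?_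
  obtain ⟨P, Q, hQ, hPQ⟩ := hh ε hε
  have hQf : ∀ x, Q.eval (f x) ≠ 0 := fun x => hQ _ (mem_range_self x)
  let b : C(X, ℂ) := ⟨fun x => (Q.eval (f x))⁻¹, (Q.continuous.comp f.continuous).inv₀ hQf⟩
  have hb : Polynomial.aeval f Q * b = 1 := by
    ext x; simp [b, Polynomial.aeval_continuousMap_apply, hQf x]
  have hmem : ∀ R : Polynomial ℂ, Polynomial.aeval f R ∈ rationalFunctions X := fun R => by
    rw [← Polynomial.aeval_subalgebra_coe R _ ⟨f, hf⟩]
    exact Subtype.property _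
  refine ⟨Polynomial.aeval f P * b, mul_mem (hmem P)
    (mem_rationalFunctions_of_mul_eq_one (hmem Q) hb), fun x => ?_⟩
  simpa [b, Polynomial.aeval_continuousMap_apply, div_eq_mul_inv] using
    hPQ _ (mem_range_self x)

end

theorem ratAlg_of_fiberwise_RV_general
    (X : Set (ℂ × ℂ)) (hX : IsCompact X)
    (p q : MvPolynomial (Fin 2) ℂ)
    (hq : ∀ x ∈ X, evalP q x ≠ 0)
    (f : ℂ × ℂ → ℂ) (hf : ∀ x, f x = evalP p x / evalP q x)
    (Γ : Set ℂ) (hΓ : Γ = f '' X)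
    (hRΓ : ∀ g : ℂ → ℂ, ContinuousOn g Γ → MemRatAlg1 Γ g)
    (F : ℂ × ℂ → ℂ) (hF : Differentiable ℂ F)
    (hFX : ∀ x ∈ X, F x ≠ 0)
    (ψ : ℂ × ℂ → ℂ) (hψ : ContinuousOn ψ X)
    (hfib : ∀ t ∈ Γ, MemRVAlg F {x ∈ X | evalP p x = t * evalP q x} ψ) :
    MemRatAlg X ψ := by
  have := isCompact_iff_compactSpace.mp hX
  let fX : C(X, ℂ) := ⟨fun x => f x, by
    simp only [hf]
    exact ((continuous_evalP p).comp continuous_subtype_val).div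
      ((continuous_evalP q).comp continuous_subtype_val) fun x => hq x x.2⟩
  have hfX : fX ∈ rationalFunctions X := ⟨p, q, fun x => hq x x.2, fun x => hf x⟩
  have hrange : range fX = Γ := by rw [hΓ, image_eq_range]; rfl
  let invF : C(X, ℂ) := ⟨fun x => (F x)⁻¹,
    (hF.continuous.comp continuous_subtype_val).inv₀ fun x => hFX x x.2⟩
  have hinvF : invF ∈ ratAlg X :=
    mem_ratAlg_of_mul_eq_one
      (restrict_mem_ratAlg hF) (by ext x; simp [invF, hFX x x.2])
  refine MemRatAlg.of_mem_ratAlg hψ <| Subalgebra.mem_of_forall_fiber_approx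
    (rationalFunctions X).isClosed_topologicalClosure
    (fun h => comp_mem_ratAlg hfX
      (hrange ▸ hRΓ h h.continuous.continuousOn)) ?_
  rintro t ht ε hε
  obtain ⟨G, m, hG, hGψ⟩ := hfib t (hrange ▸ ht) ε hε
  refine ⟨ContinuousMap.restrict X ⟨G, hG.continuous⟩ * invF ^ m,
    mul_mem (restrict_mem_ratAlg hG) (pow_mem hinvF m),
    fun x hx => ?_⟩
  have hxt : evalP p x = t * evalP q x := by
    rw [← hx, show fX x = f x from rfl, hf, div_mul_cancel₀ _ (hq x x.2)]
  simpa [invF, div_eq_mul_inv] using hGψ x ⟨x.2, hxt⟩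

/-- If `X ⊆ ℂ²` is compact, `f = p/q` is a rational function with `q` nonvanishing on `X`,
`Γ = f(X)` satisfies `R(Γ) = C(Γ)`, and `F` is entire with zero set `V` disjoint from `X`,
then `R(X)` contains every `ψ ∈ C(X)` whose restriction to each fiber `X_t`, `t ∈ Γ`,
lies in `R_V(X_t)`. -/
theorem ratAlg_of_fiberwise_RV
    (X : Set (ℂ × ℂ)) (hX : IsCompact X)
    (p q : MvPolynomial (Fin 2) ℂ) (hpq : IsCoprime p q)
    (hq : ∀ x ∈ X, evalP q x ≠ 0)
    (f : ℂ × ℂ → ℂ) (hf : ∀ x, f x = evalP p x / evalP q x)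
    (Γ : Set ℂ) (hΓ : Γ = f '' X)
    (hRΓ : ∀ g : ℂ → ℂ, ContinuousOn g Γ → MemRatAlg1 Γ g)
    (F : ℂ × ℂ → ℂ) (hF : Differentiable ℂ F)
    (hFX : ∀ x ∈ X, F x ≠ 0)
    (ψ : ℂ × ℂ → ℂ) (hψ : ContinuousOn ψ X)
    (hfib : ∀ t ∈ Γ, MemRVAlg F {x ∈ X | evalP p x = t * evalP q x} ψ) :
    MemRatAlg X ψ :=
  ratAlg_of_fiberwise_RV_general X hX p q hq f hf Γ hΓ hRΓ F hF hFX ψ hψ hfib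
end

section
/- Let 0 < b < a be real numbers and let K be Rudin's Klein bottle with parameters a, b. Then the annulus A = {(z,0) ∈ ℂ² : (a−b)² ≤ |z| ≤ (a+b)²} is contained in the rational hull h_R(K); equivalently, every polynomial P : ℂ² → ℂ that is nonvanishing on K is also nonvanishing on A. -/
open Complex Set

/-- `g(φ) = a + b cos φ`, as a complex number. -/
noncomputable def gK (a b : ℝ) (φ : ℝ) : ℂ := ((a + b * Real.cos φ : ℝ) : ℂ)

/-- `h(φ) = sin φ + i sin 2φ`. -/
noncomputable def hK (φ : ℝ) : ℂ := (Real.sin φ : ℂ) + Complex.I * (Real.sin (2 * φ) : ℂ)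

/-- Rudin's Klein bottle with parameters `a, b`:
`K = {(e^{2iθ} g(φ)², e^{iθ} g(φ) h(φ)) : θ, φ ∈ [−π, π)}`. -/
noncomputable def rudinKlein (a b : ℝ) : Set (ℂ × ℂ) :=
  {x | ∃ θ ∈ Set.Ico (-Real.pi) Real.pi, ∃ φ ∈ Set.Ico (-Real.pi) Real.pi,
    x = (Complex.exp (2 * Complex.I * (θ : ℂ)) * gK a b φ ^ 2,
         Complex.exp (Complex.I * (θ : ℂ)) * gK a b φ * hK φ)}

/-- The closed annulus `A = {(z,0) : (a−b)² ≤ |z| ≤ (a+b)²}` in the plane `w = 0`. -/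
def annulusA (a b : ℝ) : Set (ℂ × ℂ) :=
  {x | x.2 = 0 ∧ (a - b) ^ 2 ≤ ‖x.1‖ ∧ ‖x.1‖ ≤ (a + b) ^ 2}

/-- The rational hull of a compact set `X ⊆ ℂ²`. -/
def rationalHull (X : Set (ℂ × ℂ)) : Set (ℂ × ℂ) :=
  {x | ∀ P : MvPolynomial (Fin 2) ℂ, evalP P x ∈ evalP P '' X}

/-! If `P(λ₀², 0) = 0` with `λ₀²` in the annulus, consider for `φ ∈ [0, π]` the polynomials
`q_φ(λ) = P(λ², h(φ) λ)`. The points `(λ², h(φ) λ)` with `|λ| = g(φ)` lie on `K`, so when `P` has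
no zero on `K`, `q_φ` has no zero on the circle `|λ| = g(φ)`, and by the argument principle the
number of zeros of `q_φ` in the disc `|λ| < g(φ)` does not depend on `φ`. As `h(0) = h(π) = 0`,
both ends give the polynomial `λ ↦ P(λ², 0)`, which therefore has as many zeros in `|λ| < a + b`
as in `|λ| < a − b`; the zero `λ₀`, strictly between the two circles, contradicts this. Applied to
`P − P(x)`, this puts the annulus in the rational hull. -/

open Metric Polynomial Real

theorem Polynomial.continuous_eval_map_evalRingHom {R : Type*} [CommSemiring R]
    [TopologicalSpace R] [IsTopologicalSemiring R] (Q : R[X][X]) :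
    Continuous fun p : R × R => (Q.map (evalRingHom p.1)).eval p.2 := by
  simp only [eval_map, eval₂_eq_sum_range, coe_evalRingHom]
  fun_prop

theorem Multiset.sum_map_ite_zero {α M : Type*} [AddCommMonoid M] (s : Multiset α)
    (p : α → Prop) [DecidablePred p] (a : M) :
    (s.map fun x => if p x then a else 0).sum = s.countP p • a := by
  induction s using Multiset.induction_on with
  | empty => simp
  | cons x s ih => by_cases hx : p x <;> simp [hx, ih, add_smul, add_comm]

theorem Multiset.countP_lt_countP {α : Type*} {s : Multiset α} {p q : α → Prop}
    [DecidablePred p] [DecidablePred q] (hpq : ∀ x, p x → q x) {x : α} (hx : x ∈ s)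
    (hqx : q x) (hpx : ¬p x) : s.countP p < s.countP q := by
  have hqp : s.countP (fun y => q y ∧ p y) = s.countP p :=
    countP_congr rfl fun y _ => propext ⟨And.right, fun h => ⟨hpq y h, h⟩⟩
  rw [s.countP_eq_countP_filter_add q p, countP_filter, hqp]
  exact Nat.lt_add_of_pos_right (countP_pos_of_mem (mem_filter.2 ⟨hx, hpx⟩) hqx)

theorem circleIntegral.integral_multiset_sum {E ι : Type*} [NormedAddCommGroup E]
    [NormedSpace ℂ E] {c : ℂ} {R : ℝ} (s : Multiset ι) {f : ι → ℂ → E}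
    (h : ∀ i ∈ s, CircleIntegrable (f i) c R) :
    (∮ z in C(c, R), (s.map fun i => f i z).sum) =
      (s.map fun i => ∮ z in C(c, R), f i z).sum := by
  classical
  rw [← Multiset.map_univ_coe s]
  simp only [Multiset.map_map, Function.comp_def, ← Finset.sum_eq_multiset_sum]
  exact circleIntegral.integral_fun_sum fun i _ => h i Multiset.coe_mem

open scoped Classical in
theorem circleIntegral.integral_sub_inv_eq_ite {c w : ℂ} {R : ℝ} (hR : 0 ≤ R)
    (hw : w ∉ sphere c R) :
    (∮ z in C(c, R), (z - w)⁻¹) = if w ∈ ball c R then 2 * π * I else 0 := by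
  split_ifs with hball
  · exact circleIntegral.integral_sub_inv_of_mem_ball hball
  · have hout : ∀ z ∈ closedBall c R, z - w ≠ 0 := fun z hz h => by
      rw [sub_eq_zero.1 h] at hz
      exact hw (mem_sphere.2 (le_antisymm hz (not_lt.1 (by simpa using hball))))
    refine DiffContOnCl.circleIntegral_eq_zero hR ?_
    exact ((differentiableOn_id.sub_const w).inv hout).diffContOnCl_ball subset_rfl

open scoped Classical in
theorem Polynomial.circleIntegral_eval_derivative_div_eval {q : ℂ[X]} {c : ℂ} {R : ℝ}
    (hR : 0 ≤ R) (hq : ∀ z ∈ sphere c R, q.eval z ≠ 0) :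
    (∮ z in C(c, R), q.derivative.eval z / q.eval z) =
      q.roots.countP (· ∈ ball c R) • (2 * π * I) := by
  have hroots : ∀ ρ ∈ q.roots, ρ ∉ sphere c R :=
    fun ρ hρ hs => hq ρ hs (isRoot_of_mem_roots hρ)
  calc (∮ z in C(c, R), q.derivative.eval z / q.eval z)
      = ∮ z in C(c, R), (q.roots.map fun ρ => (z - ρ)⁻¹).sum :=
        circleIntegral.integral_congr hR fun z hz => by
          simpa only [one_div] using
            (IsAlgClosed.splits q).eval_derivative_div_eval_of_ne_zero (hq z hz)
    _ = (q.roots.map fun ρ => ∮ z in C(c, R), (z - ρ)⁻¹).sum :=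
        circleIntegral.integral_multiset_sum _ fun ρ hρ => by
          simpa [abs_of_nonneg hR] using Or.inr (hroots ρ hρ)
    _ = (q.roots.map fun ρ => if ρ ∈ ball c R then 2 * π * I else 0).sum :=
        congrArg _ <| Multiset.map_congr rfl fun ρ hρ =>
          circleIntegral.integral_sub_inv_eq_ite hR (hroots ρ hρ)
    _ = _ := Multiset.sum_map_ite_zero _ _ _

open scoped Classical in
theorem Polynomial.countP_roots_mem_ball_eq {T : Type*} [TopologicalSpace T]
    [PreconnectedSpace T] {c : ℂ} {q : T → ℂ[X]} {r : T → ℝ}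
    (hq : Continuous fun p : T × ℂ => (q p.1).eval p.2)
    (hq' : Continuous fun p : T × ℂ => (q p.1).derivative.eval p.2)
    (hr : Continuous r) (hr0 : ∀ t, 0 ≤ r t)
    (hne : ∀ t, ∀ z ∈ sphere c (r t), (q t).eval z ≠ 0) (t₀ t₁ : T) :
    (q t₀).roots.countP (· ∈ ball c (r t₀)) = (q t₁).roots.countP (· ∈ ball c (r t₁)) := by
  set N : T → ℕ := fun t => (q t).roots.countP (· ∈ ball c (r t))
  have hF : Continuous fun t => ∮ z in C(c, r t), (q t).derivative.eval z / (q t).eval z := by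
    have hcm : Continuous fun p : T × ℝ => circleMap c (r p.1) p.2 := by
      unfold circleMap; fun_prop
    have hcm₀ : Continuous fun p : T × ℝ => circleMap 0 (r p.1) p.2 := by
      unfold circleMap; fun_prop
    simp only [circleIntegral, deriv_circleMap]
    refine intervalIntegral.continuous_parametric_intervalIntegral_of_continuous' ?_ _ _
    exact (hcm₀.mul continuous_const).smul <|
      (hq'.comp (continuous_fst.prodMk hcm)).div (hq.comp (continuous_fst.prodMk hcm))
        fun p => hne p.1 _ (circleMap_mem_sphere c (hr0 p.1) p.2)
  have hN : Continuous fun t => (N t : ℝ) := by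
    have h2πI : (2 * π * I : ℂ) ≠ 0 := by simp [Real.pi_ne_zero, I_ne_zero]
    have hNF : (fun t => ((N t : ℝ) : ℂ)) = fun t =>
        (∮ z in C(c, r t), (q t).derivative.eval z / (q t).eval z) / (2 * π * I) := by
      funext t
      rw [(q t).circleIntegral_eval_derivative_div_eval (hr0 t) (hne t), nsmul_eq_mul,
        mul_div_cancel_right₀ _ h2πI]
      simp [N]
    refine Complex.isometry_ofReal.isEmbedding.continuous_iff.2 ?_
    simpa only [Function.comp_def, hNF] using hF.div_const _
  exact PreconnectedSpace.constant ‹_› (Nat.isClosedEmbedding_coe_real.continuous_iff.2 hN)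

-- `P(λ², tλ)`, as a polynomial in `λ` whose coefficients are polynomials in `t`.
noncomputable def parabolaPullback (P : MvPolynomial (Fin 2) ℂ) : ℂ[X][X] :=
  MvPolynomial.aeval ![X ^ 2, C X * X] P

theorem eval_map_parabolaPullback (P : MvPolynomial (Fin 2) ℂ) (t z : ℂ) :
    ((parabolaPullback P).map (evalRingHom t)).eval z = evalP P (z ^ 2, t * z) := by
  rw [eval_map, ← coe_eval₂RingHom, parabolaPullback, MvPolynomial.map_aeval, evalP,
    MvPolynomial.coe_eval₂Hom]
  congr 1
  · ext; simp
  · funext i; fin_cases i <;> simp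

theorem mk_mem_rudinKlein (a b θ φ : ℝ) :
    (exp (2 * I * θ) * gK a b φ ^ 2, exp (I * θ) * gK a b φ * hK φ) ∈ rudinKlein a b := by
  have hθ : Function.Periodic (fun θ : ℝ => (exp (2 * I * θ), exp (I * θ))) (2 * π) :=
    fun θ => by
      simp only [Prod.mk.injEq]; push_cast
      rw [show 2 * I * (θ + 2 * π) = 2 * I * θ + 2 * π * I + 2 * π * I by ring,
        show I * (θ + 2 * π) = I * θ + 2 * π * I by ring, exp_periodic, exp_periodic,
        exp_periodic]
      exact ⟨rfl, rfl⟩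
  have hφ : Function.Periodic (fun φ : ℝ => (gK a b φ, hK φ)) (2 * π) := fun φ => by
    simp only [gK, hK, Real.cos_add_two_pi, Real.sin_add_two_pi, mul_add,
      show 2 * (2 * π) = 2 * π + 2 * π by ring, ← add_assoc]
  obtain ⟨θ', hθ', hθeq⟩ := hθ.exists_mem_Ico two_pi_pos θ (-π)
  obtain ⟨φ', hφ', hφeq⟩ := hφ.exists_mem_Ico two_pi_pos φ (-π)
  rw [show -π + 2 * π = π by ring] at hθ' hφ'
  simp only [Prod.mk.injEq] at hθeq hφeq
  exact ⟨θ', hθ', φ', hφ', by rw [hθeq.1, hθeq.2, hφeq.1, hφeq.2]⟩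

theorem mem_rudinKlein_of_norm_eq {a b φ : ℝ} {z : ℂ} (hz : ‖z‖ = a + b * Real.cos φ) :
    (z ^ 2, hK φ * z) ∈ rudinKlein a b := by
  have hg : gK a b φ = ‖z‖ := by rw [gK, hz]
  have hexp : exp (2 * I * (arg z : ℂ)) = exp (arg z * I) ^ 2 := by
    rw [← Complex.exp_nat_mul]; ring_nf
  convert mk_mem_rudinKlein a b (arg z) φ using 1
  conv_lhs => rw [← norm_mul_exp_arg_mul_I z]
  rw [hg, hexp, Prod.mk.injEq]
  constructor <;> ring_nf

theorem hK_zero : hK 0 = 0 := by simp [hK]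

theorem hK_pi : hK π = 0 := by simp [hK]

open scoped Classical in
theorem countP_roots_parabolaPullback_ball_eq {a b : ℝ} (hb : 0 < b) (hab : b < a)
    {P : MvPolynomial (Fin 2) ℂ} (hP : ∀ x ∈ rudinKlein a b, evalP P x ≠ 0) :
    ((parabolaPullback P).map (evalRingHom 0)).roots.countP (· ∈ ball 0 (a + b)) =
      ((parabolaPullback P).map (evalRingHom 0)).roots.countP (· ∈ ball 0 (a - b)) := by
  set Q := parabolaPullback P
  let q : Icc 0 π → ℂ[X] := fun φ => Q.map (evalRingHom (hK φ))
  have hne : ∀ φ : Icc 0 π, ∀ z ∈ sphere 0 (a + b * Real.cos φ), (q φ).eval z ≠ 0 :=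
    fun φ z hz => by
      rw [eval_map_parabolaPullback]
      exact hP _ (mem_rudinKlein_of_norm_eq (by simpa using hz))
  have hcont : Continuous fun p : Icc 0 π × ℂ => (hK p.1, p.2) := by unfold hK; fun_prop
  have := Subtype.preconnectedSpace (isPreconnected_Icc (a := 0) (b := π))
  have hcount := countP_roots_mem_ball_eq (q := q) (r := fun φ => a + b * Real.cos φ)
    ((continuous_eval_map_evalRingHom Q).comp hcont)
    (by simpa only [q, derivative_map, Function.comp_def] using
      (continuous_eval_map_evalRingHom Q.derivative).comp hcont)
    (by fun_prop) (fun φ => by nlinarith [neg_one_le_cos φ]) hne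
    ⟨0, left_mem_Icc.2 pi_nonneg⟩ ⟨π, right_mem_Icc.2 pi_nonneg⟩
  simpa only [q, hK_zero, hK_pi, Real.cos_zero, Real.cos_pi, mul_one, mul_neg,
    ← sub_eq_add_neg] using hcount

theorem evalP_ne_zero_of_mem_annulusA {a b : ℝ} (hb : 0 < b) (hab : b < a)
    {P : MvPolynomial (Fin 2) ℂ} (hP : ∀ x ∈ rudinKlein a b, evalP P x ≠ 0) {x : ℂ × ℂ}
    (hx : x ∈ annulusA a b) : evalP P x ≠ 0 := by
  classical
  obtain ⟨z, w⟩ := x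
  obtain ⟨rfl, hlo, hhi⟩ : w = 0 ∧ (a - b) ^ 2 ≤ ‖z‖ ∧ ‖z‖ ≤ (a + b) ^ 2 := hx
  obtain ⟨l, rfl⟩ := IsAlgClosed.exists_pow_nat_eq z two_pos
  rw [norm_pow] at hlo hhi
  intro hl
  set p₀ := (parabolaPullback P).map (evalRingHom 0)
  have hp₀ : ∀ z, p₀.eval z = evalP P (z ^ 2, 0) := fun z => by
    rw [eval_map_parabolaPullback, zero_mul]
  have hne : ∀ φ, hK φ = 0 → ∀ z : ℂ, ‖z‖ = a + b * Real.cos φ → p₀.eval z ≠ 0 :=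
    fun φ hφ z hz => by
      simpa only [hp₀, hφ, zero_mul] using hP _ (mem_rudinKlein_of_norm_eq hz)
  have hl_lo : a - b < ‖l‖ := by
    refine ((pow_le_pow_iff_left₀ (by linarith) (norm_nonneg _) two_ne_zero).1 hlo).lt_of_ne ?_
    exact fun h => hne π hK_pi l (by rw [← h, Real.cos_pi]; ring) (by rw [hp₀, hl])
  have hl_hi : ‖l‖ < a + b := by
    refine ((pow_le_pow_iff_left₀ (norm_nonneg _) (by linarith) two_ne_zero).1 hhi).lt_of_ne ?_
    exact fun h => hne 0 hK_zero l (by rw [h, Real.cos_zero, mul_one]) (by rw [hp₀, hl])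
  have hp₀_ne : p₀ ≠ 0 := fun h => hne 0 hK_zero ((a + b : ℝ) : ℂ)
    (by rw [norm_real, Real.norm_of_nonneg (by linarith), Real.cos_zero, mul_one])
    (by rw [h, eval_zero])
  refine (Multiset.countP_lt_countP (fun y (hy : y ∈ ball 0 (a - b)) =>
      ball_subset_ball (by linarith) hy) ((mem_roots hp₀_ne).2 (by rw [IsRoot, hp₀, hl]))
    (by simpa using hl_hi) (by simpa using hl_lo.le)).ne'
    (countP_roots_parabolaPullback_ball_eq hb hab hP)

theorem evalP_sub_C (P : MvPolynomial (Fin 2) ℂ) (c : ℂ) (x : ℂ × ℂ) :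
    evalP (P - MvPolynomial.C c) x = evalP P x - c := by
  simp [evalP]

/-- The annulus `A` is contained in the rational hull of Rudin's Klein bottle `K`;
equivalently, every polynomial nonvanishing on `K` is nonvanishing on `A`. -/
theorem annulus_subset_rationalHull_rudinKlein (a b : ℝ) (hb : 0 < b) (hab : b < a) :
    annulusA a b ⊆ rationalHull (rudinKlein a b) ∧
      ∀ P : MvPolynomial (Fin 2) ℂ, (∀ x ∈ rudinKlein a b, evalP P x ≠ 0) →
        ∀ x ∈ annulusA a b, evalP P x ≠ 0 := by
  refine ⟨fun x hx P => ?_, fun P hP x hx => evalP_ne_zero_of_mem_annulusA hb hab hP hx⟩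
  by_contra hnot
  refine evalP_ne_zero_of_mem_annulusA hb hab (P := P - MvPolynomial.C (evalP P x))
    (fun y hy h => hnot ⟨y, hy, ?_⟩) hx ?_
  · rwa [evalP_sub_C, sub_eq_zero] at h
  · rw [evalP_sub_C, sub_self]
end

section
/- Let 0 < b < a be real numbers and let K be Rudin's Klein bottle with parameters a, b. For t ∈ ℂ, let K_t = {(z,w) ∈ K : w² = t z}, and for φ ∈ ℝ let C_φ = {(e^{2iθ} g(φ)², e^{iθ} g(φ) h(φ)) : θ ∈ ℝ}. Then: (i) C_φ = C_{−φ} for every φ ∈ ℝ; (ii) K_0 = C_0 ∪ C_{−π}; and (iii) for every t ∈ h(ℝ)² with t ≠ 0 (i.e., t = h(φ)² for some φ), there exists φ ∈ (0,π) with h(φ)² = t and K_t = C_φ, a single circle. -/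
open Complex Set

/-- The circle `C_φ = {(e^{2iθ} g(φ)², e^{iθ} g(φ) h(φ)) : θ ∈ ℝ}`. -/
noncomputable def circleC (a b : ℝ) (φ : ℝ) : Set (ℂ × ℂ) :=
  {x | ∃ θ : ℝ, x = (Complex.exp (2 * Complex.I * (θ : ℂ)) * gK a b φ ^ 2,
    Complex.exp (Complex.I * (θ : ℂ)) * gK a b φ * hK φ)}

/-- The fiber `K_t = {(z,w) ∈ K : w² = t z}` of Rudin's Klein bottle. -/
noncomputable def kleinFiber (a b : ℝ) (t : ℂ) : Set (ℂ × ℂ) :=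
  {x ∈ rudinKlein a b | x.2 ^ 2 = t * x.1}

/-!
The point of `K` with parameters `(θ, φ)` satisfies `w² = h(φ)² z`, and `z ≠ 0` since `|b| < a`;
so `K_t` is the union of the circles `C_φ` with `h(φ)² = t`. The circle `C_φ` depends only on
`cos φ` (replacing `θ` by `θ + π` absorbs the sign of `h(φ)`), and when `sin φ ≠ 0`, `h(ψ)² = h(φ)²`
forces `cos ψ = cos φ`. Hence a nonzero fiber is a single circle, which `arccos` places at an angle
in `(0, π)`, while the zero fiber consists of the circles with `cos φ = ±1`.
-/

noncomputable def kleinParam (a b θ φ : ℝ) : ℂ × ℂ :=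
  (Complex.exp (2 * Complex.I * (θ : ℂ)) * gK a b φ ^ 2,
    Complex.exp (Complex.I * (θ : ℂ)) * gK a b φ * hK φ)

lemma gK_ne_zero {a b : ℝ} (h : |b| < a) (φ : ℝ) : gK a b φ ≠ 0 := by
  have hcos : |b * Real.cos φ| ≤ |b| := by
    rw [abs_mul]
    exact mul_le_of_le_one_right (abs_nonneg b) (Real.abs_cos_le_one φ)
  rw [gK, Complex.ofReal_ne_zero]
  linarith [neg_abs_le (b * Real.cos φ)]

lemma hK_re (φ : ℝ) : (hK φ).re = Real.sin φ := by
  simp only [hK, Complex.add_re, Complex.mul_re, Complex.ofReal_re, Complex.ofReal_im,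
    Complex.I_re, Complex.I_im]
  ring

lemma hK_im (φ : ℝ) : (hK φ).im = Real.sin (2 * φ) := by
  simp only [hK, Complex.add_im, Complex.mul_im, Complex.ofReal_re, Complex.ofReal_im,
    Complex.I_re, Complex.I_im]
  ring

lemma gK_periodic (a b : ℝ) : Function.Periodic (gK a b) (2 * Real.pi) := by
  intro φ
  rw [gK, gK, Real.cos_periodic φ]

lemma hK_periodic : Function.Periodic hK (2 * Real.pi) := by
  intro φ
  rw [hK, hK, Real.sin_periodic φ, show 2 * (φ + 2 * Real.pi) = 2 * φ + 2 * Real.pi + 2 * Real.pi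
    by ring, Real.sin_periodic, Real.sin_periodic]

lemma exp_two_mul_I_mul (θ : ℂ) :
    Complex.exp (2 * Complex.I * θ) = Complex.exp (Complex.I * θ) ^ 2 := by
  rw [← Complex.exp_nat_mul]
  ring_nf

lemma hK_eq_zero_iff {φ : ℝ} : hK φ = 0 ↔ Real.sin φ = 0 := by
  simp only [Complex.ext_iff, hK_re, hK_im, Complex.zero_re, Complex.zero_im, Real.sin_two_mul]
  exact ⟨And.left, fun h => by simp [h]⟩

lemma hK_eq_or_eq_neg_of_cos_eq {φ ψ : ℝ} (h : Real.cos ψ = Real.cos φ) :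
    hK ψ = hK φ ∨ hK ψ = -hK φ := by
  have hsin : Real.sin ψ = Real.sin φ ∨ Real.sin ψ = -Real.sin φ :=
    sq_eq_sq_iff_eq_or_eq_neg.mp (by rw [Real.sin_sq, Real.sin_sq, h])
  rcases hsin with hs | hs
  · left
    apply Complex.ext <;> simp [hK_re, hK_im, Real.sin_two_mul, hs, h]
  · right
    apply Complex.ext <;> simp [hK_re, hK_im, Real.sin_two_mul, hs, h]

lemma hK_sq_eq_hK_sq_iff {φ ψ : ℝ} (hs : Real.sin φ ≠ 0) :
    hK ψ ^ 2 = hK φ ^ 2 ↔ Real.cos ψ = Real.cos φ := by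
  rw [sq_eq_sq_iff_eq_or_eq_neg]
  refine ⟨fun h => ?_, hK_eq_or_eq_neg_of_cos_eq⟩
  obtain ⟨ε, hε, hψ⟩ : ∃ ε : ℝ, ε ≠ 0 ∧ hK ψ = ε * hK φ := by
    rcases h with h | h
    · exact ⟨1, one_ne_zero, by rw [h, Complex.ofReal_one, one_mul]⟩
    · exact ⟨-1, by norm_num, by rw [h]; push_cast; ring⟩
  have hre : Real.sin ψ = ε * Real.sin φ := by simpa [hK_re] using congrArg Complex.re hψ
  have him : Real.sin (2 * ψ) = ε * Real.sin (2 * φ) := by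
    simpa [hK_im] using congrArg Complex.im hψ
  rw [Real.sin_two_mul, Real.sin_two_mul, hre] at him
  exact mul_left_cancel₀ (mul_ne_zero (mul_ne_zero two_ne_zero hε) hs) (by linear_combination him)

lemma exists_mem_Ioo_cos_eq {φ₀ : ℝ} (hs : Real.sin φ₀ ≠ 0) :
    ∃ φ ∈ Ioo 0 Real.pi, Real.cos φ = Real.cos φ₀ := by
  have h1 : Real.cos φ₀ ≠ 1 ∧ Real.cos φ₀ ≠ -1 := by
    simpa [Real.sin_eq_zero_iff_cos_eq, not_or] using hs
  exact ⟨Real.arccos (Real.cos φ₀),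
    ⟨Real.arccos_pos.2 ((Real.cos_le_one _).lt_of_ne h1.1),
      Real.arccos_lt_pi.2 ((Real.neg_one_le_cos _).lt_of_ne' h1.2)⟩,
    Real.cos_arccos (Real.neg_one_le_cos _) (Real.cos_le_one _)⟩

section KleinBottle

variable {a b : ℝ}

lemma kleinParam_snd_sq (θ φ : ℝ) :
    (kleinParam a b θ φ).2 ^ 2 = hK φ ^ 2 * (kleinParam a b θ φ).1 := by
  simp only [kleinParam, exp_two_mul_I_mul]
  ring

lemma kleinParam_add_pi_of_hK_eq_neg {φ ψ : ℝ} (hg : gK a b ψ = gK a b φ)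
    (hh : hK ψ = -hK φ) (θ : ℝ) : kleinParam a b (θ + Real.pi) φ = kleinParam a b θ ψ := by
  have he : Complex.exp (Complex.I * ((θ + Real.pi : ℝ) : ℂ)) = -Complex.exp (Complex.I * θ) := by
    rw [Complex.ofReal_add, mul_add, Complex.exp_add, mul_comm Complex.I (Real.pi : ℂ),
      Complex.exp_pi_mul_I, mul_neg_one]
  simp only [kleinParam, exp_two_mul_I_mul, he, hg, hh]
  ext <;> ring

lemma kleinParam_periodic_left (φ : ℝ) :
    Function.Periodic (fun θ => kleinParam a b θ φ) (2 * Real.pi) := by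
  intro θ
  have he :
      Complex.exp (Complex.I * ((θ + 2 * Real.pi : ℝ) : ℂ)) = Complex.exp (Complex.I * θ) := by
    simpa [mul_comm, mul_add] using Complex.exp_mul_I_periodic θ
  simp only [kleinParam, exp_two_mul_I_mul, he]

lemma kleinParam_periodic_right (θ : ℝ) :
    Function.Periodic (kleinParam a b θ) (2 * Real.pi) := by
  intro φ
  simp only [kleinParam, gK_periodic a b φ, hK_periodic φ]

lemma circleC_eq_range (φ : ℝ) : circleC a b φ = range (fun θ => kleinParam a b θ φ) := by
  ext x
  exact exists_congr fun θ => eq_comm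

lemma circleC_eq_of_cos_eq {φ ψ : ℝ} (h : Real.cos ψ = Real.cos φ) :
    circleC a b ψ = circleC a b φ := by
  have hg : gK a b ψ = gK a b φ := by rw [gK, gK, h]
  rcases hK_eq_or_eq_neg_of_cos_eq h with hh | hh
  · simp only [circleC, hg, hh]
  · rw [circleC_eq_range, circleC_eq_range,
      ← (Equiv.addRight Real.pi).surjective.range_comp (fun θ => kleinParam a b θ φ)]
    exact congrArg range (funext fun θ => (kleinParam_add_pi_of_hK_eq_neg hg hh θ).symm)

lemma rudinKlein_eq_iUnion_circleC : rudinKlein a b = ⋃ φ, circleC a b φ := by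
  ext x
  simp only [rudinKlein, circleC, mem_iUnion, mem_ofPred_eq]
  constructor
  · rintro ⟨θ, -, φ, -, rfl⟩
    exact ⟨φ, θ, rfl⟩
  · rintro ⟨φ, θ, rfl⟩
    have hπ : -Real.pi + 2 * Real.pi = Real.pi := by ring
    obtain ⟨θ', hθ', hθ⟩ :=
      (kleinParam_periodic_left (a := a) (b := b) φ).exists_mem_Ico Real.two_pi_pos θ (-Real.pi)
    obtain ⟨φ', hφ', hφ⟩ :=
      (kleinParam_periodic_right θ').exists_mem_Ico Real.two_pi_pos φ (-Real.pi)
    rw [hπ] at hθ' hφ'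
    exact ⟨θ', hθ', φ', hφ', hθ.trans hφ⟩

lemma kleinFiber_eq_iUnion (hg : ∀ φ, gK a b φ ≠ 0) (t : ℂ) :
    kleinFiber a b t = ⋃ (φ : ℝ) (_ : hK φ ^ 2 = t), circleC a b φ := by
  have hfst (θ φ : ℝ) : (kleinParam a b θ φ).1 ≠ 0 :=
    mul_ne_zero (Complex.exp_ne_zero _) (pow_ne_zero 2 (hg φ))
  ext x
  simp only [kleinFiber, rudinKlein_eq_iUnion_circleC, circleC_eq_range, mem_iUnion,
    mem_range, exists_prop]
  constructor
  · rintro ⟨⟨φ, θ, rfl⟩, hx⟩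
    rw [kleinParam_snd_sq] at hx
    exact ⟨φ, mul_right_cancel₀ (hfst θ φ) hx, θ, rfl⟩
  · rintro ⟨φ, rfl, θ, rfl⟩
    exact ⟨⟨φ, θ, rfl⟩, kleinParam_snd_sq θ φ⟩

lemma kleinFiber_zero (hg : ∀ φ, gK a b φ ≠ 0) :
    kleinFiber a b 0 = circleC a b 0 ∪ circleC a b (-Real.pi) := by
  have hcos_neg_pi : Real.cos (-Real.pi) = -1 := by rw [Real.cos_neg, Real.cos_pi]
  ext x
  simp only [kleinFiber_eq_iUnion hg, mem_iUnion, mem_union, exists_prop,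
    pow_eq_zero_iff two_ne_zero, hK_eq_zero_iff, Real.sin_eq_zero_iff_cos_eq]
  constructor
  · rintro ⟨ψ, hψ | hψ, hx⟩
    · exact Or.inl (circleC_eq_of_cos_eq (hψ.trans Real.cos_zero.symm) ▸ hx)
    · exact Or.inr (circleC_eq_of_cos_eq (hψ.trans hcos_neg_pi.symm) ▸ hx)
  · rintro (hx | hx)
    · exact ⟨0, Or.inl Real.cos_zero, hx⟩
    · exact ⟨-Real.pi, Or.inr hcos_neg_pi, hx⟩

lemma kleinFiber_hK_sq (hg : ∀ φ, gK a b φ ≠ 0) {φ : ℝ} (hs : Real.sin φ ≠ 0) :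
    kleinFiber a b (hK φ ^ 2) = circleC a b φ := by
  ext x
  simp only [kleinFiber_eq_iUnion hg, mem_iUnion, exists_prop]
  constructor
  · rintro ⟨ψ, hψ, hx⟩
    exact circleC_eq_of_cos_eq ((hK_sq_eq_hK_sq_iff hs).1 hψ) ▸ hx
  · exact fun hx => ⟨φ, rfl, hx⟩

end KleinBottle

/-- The fibers of Rudin's Klein bottle under `(z,w) ↦ w²/z`:
(i) `C_φ = C_{−φ}`; (ii) `K_0 = C_0 ∪ C_{−π}`; (iii) for `t ≠ 0` of the form `h(φ)²`,
there is `φ ∈ (0,π)` with `h(φ)² = t` and `K_t = C_φ`, a single circle. -/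
theorem kleinFiber_description (a b : ℝ) (hb : 0 < b) (hab : b < a) :
    (∀ φ : ℝ, circleC a b φ = circleC a b (-φ)) ∧
    (kleinFiber a b 0 = circleC a b 0 ∪ circleC a b (-Real.pi)) ∧
    (∀ t : ℂ, t ≠ 0 → (∃ φ₀ : ℝ, hK φ₀ ^ 2 = t) →
      ∃ φ ∈ Set.Ioo 0 Real.pi, hK φ ^ 2 = t ∧ kleinFiber a b t = circleC a b φ) := by
  have hg : ∀ φ, gK a b φ ≠ 0 := gK_ne_zero (abs_lt.2 ⟨by linarith, hab⟩)
  refine ⟨fun φ => (circleC_eq_of_cos_eq (Real.cos_neg φ)).symm, kleinFiber_zero hg, ?_⟩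
  rintro t ht ⟨φ₀, rfl⟩
  have hs : Real.sin φ₀ ≠ 0 := fun h => ht (by rw [hK_eq_zero_iff.2 h, zero_pow two_ne_zero])
  obtain ⟨φ, hφ, hcos⟩ := exists_mem_Ioo_cos_eq hs
  exact ⟨φ, hφ, (hK_sq_eq_hK_sq_iff hs).2 hcos,
    (kleinFiber_hK_sq hg hs).trans (circleC_eq_of_cos_eq hcos).symm⟩
end

section
/- Let J : {(z,w) ∈ ℂ² : z ≠ 0} → ℂ² be the map J(z,w) = (z, w/z). Let X ⊆ ℂ² be a compact set such that z ≠ 0 for every (z,w) ∈ X. Then every point of the rational hull h_R(X) has nonzero first coordinate, J(X) is compact, and h_R(J(X)) = J(h_R(X)). -/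
open Complex Set

/-!
The map `J(z, w) = (z, w / z)` is inverted on `{z ≠ 0}` by the polynomial map `(z, w) ↦ (z, z w)`,
and polynomial maps send rational hulls into rational hulls; this gives `h_R(J X) ⊆ J(h_R X)`.
Conversely, `z ^ N · P(z, w / z)` is a polynomial `Q` for `N` large, so if `y ∈ h_R(X)` then
`Q - c z ^ N` with `c = P(J y)` vanishes at `y`, hence at some `x ∈ X`, where it says `P(J x) = c`.
-/

open MvPolynomial

section evalP

variable (P Q : MvPolynomial (Fin 2) ℂ) (x : ℂ × ℂ)

@[simp] lemma evalP_C (a : ℂ) : evalP (C a) x = a := eval_C a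

@[simp] lemma evalP_X_zero : evalP (X 0) x = x.1 := eval_X 0

@[simp] lemma evalP_X_one : evalP (X 1) x = x.2 := eval_X 1

@[simp] lemma evalP_add : evalP (P + Q) x = evalP P x + evalP Q x := map_add _ P Q

@[simp] lemma evalP_sub : evalP (P - Q) x = evalP P x - evalP Q x := map_sub _ P Q

@[simp] lemma evalP_mul : evalP (P * Q) x = evalP P x * evalP Q x := map_mul _ P Q

@[simp] lemma evalP_pow (n : ℕ) : evalP (P ^ n) x = evalP P x ^ n := map_pow _ P n

lemma evalP_bind₁ (f g : MvPolynomial (Fin 2) ℂ) :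
    evalP (bind₁ ![f, g] P) x = evalP P (evalP f x, evalP g x) := by
  have hcomp : (fun i => aeval ![x.1, x.2] (![f, g] i)) = ![evalP f x, evalP g x] := by
    funext i; fin_cases i <;> rfl
  change aeval ![x.1, x.2] (bind₁ ![f, g] P) = aeval ![evalP f x, evalP g x] P
  rw [aeval_bind₁, hcomp]

end evalP

lemma fst_ne_zero_of_mem_rationalHull {S : Set (ℂ × ℂ)} (hz : ∀ x ∈ S, x.1 ≠ 0)
    {y : ℂ × ℂ} (hy : y ∈ rationalHull S) : y.1 ≠ 0 := by
  obtain ⟨x, hx, hxy⟩ := hy (X 0)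
  simp only [evalP_X_zero] at hxy
  exact hxy ▸ hz x hx

lemma image_rationalHull_subset (f g : MvPolynomial (Fin 2) ℂ) (S : Set (ℂ × ℂ)) :
    (fun x => (evalP f x, evalP g x)) '' rationalHull S ⊆
      rationalHull ((fun x => (evalP f x, evalP g x)) '' S) := by
  rintro _ ⟨y, hy, rfl⟩ P
  obtain ⟨x, hx, hxy⟩ := hy (bind₁ ![f, g] P)
  simp only [evalP_bind₁] at hxy
  exact ⟨_, mem_image_of_mem _ hx, hxy⟩

lemma exists_evalP_eq_fst_pow_mul_evalP_div (P : MvPolynomial (Fin 2) ℂ) :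
    ∃ (N : ℕ) (Q : MvPolynomial (Fin 2) ℂ), ∀ x : ℂ × ℂ, x.1 ≠ 0 →
      evalP Q x = x.1 ^ N * evalP P (x.1, x.2 / x.1) := by
  induction P using MvPolynomial.induction_on with
  | C a => exact ⟨0, C a, fun x _ => by simp⟩
  | add P₁ P₂ ih₁ ih₂ =>
    obtain ⟨N₁, Q₁, h₁⟩ := ih₁
    obtain ⟨N₂, Q₂, h₂⟩ := ih₂
    refine ⟨N₁ + N₂, X 0 ^ N₂ * Q₁ + X 0 ^ N₁ * Q₂, fun x hx => ?_⟩
    simp only [evalP_add, evalP_mul, evalP_pow, evalP_X_zero, h₁ x hx, h₂ x hx]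
    ring
  | mul_X P i ih =>
    obtain ⟨N, Q, h⟩ := ih
    fin_cases i
    · exact ⟨N, Q * X 0, fun x hx => by simp [h x hx, mul_assoc]⟩
    · refine ⟨N + 1, Q * X 1, fun x hx => ?_⟩
      simp only [Fin.mk_one, evalP_mul, evalP_X_one, h x hx]
      field_simp
      ring

noncomputable def divFst (x : ℂ × ℂ) : ℂ × ℂ := (x.1, x.2 / x.1)

lemma isCompact_image_divFst {S : Set (ℂ × ℂ)} (hS : IsCompact S) (hz : ∀ x ∈ S, x.1 ≠ 0) :
    IsCompact (divFst '' S) :=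
  hS.image_of_continuousOn <| continuous_fst.continuousOn.prodMk <|
    continuous_snd.continuousOn.div continuous_fst.continuousOn hz

lemma image_rationalHull_divFst_subset {S : Set (ℂ × ℂ)} (hz : ∀ x ∈ S, x.1 ≠ 0) :
    divFst '' rationalHull S ⊆ rationalHull (divFst '' S) := by
  rintro _ ⟨y, hy, rfl⟩ P
  obtain ⟨N, Q, hQ⟩ := exists_evalP_eq_fst_pow_mul_evalP_div P
  set c := evalP P (y.1, y.2 / y.1)
  obtain ⟨x, hx, hxy⟩ := hy (Q - C c * X 0 ^ N)
  have hx1 := hz x hx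
  have hy1 := fst_ne_zero_of_mem_rationalHull hz hy
  simp only [evalP_sub, evalP_mul, evalP_C, evalP_pow, evalP_X_zero, hQ x hx1, hQ y hy1] at hxy
  have hPx : evalP P (x.1, x.2 / x.1) = c := by
    have : x.1 ^ N * (evalP P (x.1, x.2 / x.1) - c) = 0 := by linear_combination hxy
    exact sub_eq_zero.1 ((mul_eq_zero.1 this).resolve_left (pow_ne_zero N hx1))
  exact ⟨divFst x, mem_image_of_mem _ hx, hPx⟩

lemma rationalHull_image_divFst_subset {S : Set (ℂ × ℂ)} (hz : ∀ x ∈ S, x.1 ≠ 0) :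
    rationalHull (divFst '' S) ⊆ divFst '' rationalHull S := by
  intro u hu
  set mulFst : ℂ × ℂ → ℂ × ℂ := fun x => (evalP (X 0) x, evalP (X 0 * X 1) x)
  have hmulFst_divFst : ∀ x : ℂ × ℂ, x.1 ≠ 0 → mulFst (divFst x) = x := by
    intro x hx
    simp [mulFst, divFst, mul_div_cancel₀ _ hx]
  have hS : mulFst '' (divFst '' S) = S := by
    rw [image_image]
    exact (image_congr fun x hx => hmulFst_divFst x (hz x hx)).trans (image_id' S)
  have hu1 := fst_ne_zero_of_mem_rationalHull
    (forall_mem_image.2 hz : ∀ p ∈ divFst '' S, p.1 ≠ 0) hu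
  refine ⟨mulFst u, ?_, ?_⟩
  · exact hS ▸ image_rationalHull_subset _ _ _ (mem_image_of_mem _ hu)
  · simp [mulFst, divFst, mul_div_cancel_left₀ _ hu1]

/-- For the rational automorphism `J(z,w) = (z, w/z)` of `{z ≠ 0}` and a compact
`X ⊆ {z ≠ 0}`: every point of the rational hull of `X` has nonzero first coordinate,
`J(X)` is compact, and `h_R(J(X)) = J(h_R(X))`. -/
theorem rationalHull_image_J (X : Set (ℂ × ℂ)) (hX : IsCompact X)
    (hz : ∀ x ∈ X, x.1 ≠ 0) :
    (∀ y ∈ rationalHull X, y.1 ≠ 0) ∧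
    IsCompact ((fun x : ℂ × ℂ => (x.1, x.2 / x.1)) '' X) ∧
    rationalHull ((fun x : ℂ × ℂ => (x.1, x.2 / x.1)) '' X) =
      (fun x : ℂ × ℂ => (x.1, x.2 / x.1)) '' rationalHull X :=
  ⟨fun _ => fst_ne_zero_of_mem_rationalHull hz, isCompact_image_divFst hX hz,
    (rationalHull_image_divFst_subset hz).antisymm (image_rationalHull_divFst_subset hz)⟩
end
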